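/- arXiv:2402.08216 — 4 statements merged into one kernel-verified Lean document; each statement's English description precedes it below -/
import Mathlib

section
/- Let B be a perfect triangle packing of a metric complete graph on n vertices (3 | n). If a triangle packing T₂ is obtained by taking a maximum-weight matching M* of size n/3 and completing each matching edge into a triangle using a distinct unused vertex, then w(T₂) ≥ 2·w(M*) ≥ 2·Σ_{t∈B} w(c_t) ≥ (2/3)·w(B). -/
def tVerts {V : Type} [DecidableEq V] (t : V × V × V) : Finset V :=
  {t.1, t.2.1, t.2.2}

def IsMatching {V : Type} [DecidableEq V] (M : Finset (V × V)) : Prop :=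
  (∀ e ∈ M, e.1 ≠ e.2) ∧
  ∀ e ∈ M, ∀ f ∈ M, e ≠ f → Disjoint ({e.1, e.2} : Finset V) {f.1, f.2}

def IsPerfectTrianglePacking {V : Type} [Fintype V] [DecidableEq V]
    (B : Finset (V × V × V)) : Prop :=
  (∀ t ∈ B, t.1 ≠ t.2.1 ∧ t.1 ≠ t.2.2 ∧ t.2.1 ≠ t.2.2) ∧
  (∀ t ∈ B, ∀ t' ∈ B, t ≠ t' → Disjoint (tVerts t) (tVerts t')) ∧
  (∀ v : V, ∃ t ∈ B, v ∈ tVerts t)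

/-- Weight of a triangle. -/
def triW {V : Type} (w : V → V → ℝ) (t : V × V × V) : ℝ :=
  w t.1 t.2.1 + w t.1 t.2.2 + w t.2.1 t.2.2

theorem stmt5 {V : Type} [Fintype V] [DecidableEq V]
    (w : V → V → ℝ)
    (hsymm : ∀ x y, w x y = w y x) (hnonneg : ∀ x y, 0 ≤ w x y)
    (htri : ∀ x y z, w x z ≤ w x y + w y z)
    (n : ℕ) (hn : n = Fintype.card V) (h3 : 3 ∣ n)
    (B : Finset (V × V × V))
    (hB : IsPerfectTrianglePacking B) (hBcard : B.card = n / 3)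
    (c : V × V × V → V × V)
    (hc : ∀ t ∈ B, c t ∈ ({(t.1, t.2.1), (t.1, t.2.2), (t.2.1, t.2.2)} : Finset (V × V)))
    (hcmax : ∀ t ∈ B, w t.1 t.2.1 ≤ w (c t).1 (c t).2 ∧
      w t.1 t.2.2 ≤ w (c t).1 (c t).2 ∧ w t.2.1 t.2.2 ≤ w (c t).1 (c t).2)
    (M : Finset (V × V)) (hM : IsMatching M) (hMcard : M.card = n / 3)
    (hMopt : ∀ M' : Finset (V × V), IsMatching M' → M'.card = n / 3 →
      ∑ e ∈ M', w e.1 e.2 ≤ ∑ e ∈ M, w e.1 e.2)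
    (z : V × V → V)
    (hzunused : ∀ e ∈ M, ∀ f ∈ M, z e ≠ f.1 ∧ z e ≠ f.2)
    (hzinj : ∀ e ∈ M, ∀ f ∈ M, e ≠ f → z e ≠ z f)
    (T₂ : Finset (V × V × V))
    (hT₂ : T₂ = M.image (fun e => (e.1, e.2, z e))) :
    2 * ∑ e ∈ M, w e.1 e.2 ≤ ∑ t ∈ T₂, triW w t ∧
    2 * ∑ t ∈ B, w (c t).1 (c t).2 ≤ 2 * ∑ e ∈ M, w e.1 e.2 ∧
    (2 / 3) * ∑ t ∈ B, triW w t ≤ 2 * ∑ t ∈ B, w (c t).1 (c t).2 := by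
  -- membership of c t endpoints in tVerts t
  have hcmem : ∀ t ∈ B, (c t).1 ∈ tVerts t ∧ (c t).2 ∈ tVerts t := by
    intro t ht
    have := hc t ht
    simp only [Finset.mem_insert, Finset.mem_singleton] at this
    rcases this with h | h | h <;> rw [h] <;> simp [tVerts]
  have hcne : ∀ t ∈ B, (c t).1 ≠ (c t).2 := by
    intro t ht
    obtain ⟨h1, h2, h3⟩ := hB.1 t ht
    have := hc t ht
    simp only [Finset.mem_insert, Finset.mem_singleton] at this
    rcases this with h | h | h <;> rw [h]
    · exact h1
    · exact h2
    · exact h3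
  have hcinj : Set.InjOn c B := by
    intro t ht t' ht' heq
    by_contra hne
    have hd := hB.2.1 t ht t' ht' hne
    have h1 := (hcmem t ht).1
    have h2 : (c t).1 ∈ tVerts t' := heq ▸ (hcmem t' ht').1
    exact (Finset.disjoint_left.mp hd h1) h2
  -- B.image c is a matching
  have hMatch : IsMatching (B.image c) := by
    constructor
    · intro e he
      obtain ⟨t, ht, rfl⟩ := Finset.mem_image.mp he
      exact hcne t ht
    · intro e he f hf hef
      obtain ⟨t, ht, rfl⟩ := Finset.mem_image.mp he
      obtain ⟨t', ht', rfl⟩ := Finset.mem_image.mp hf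
      have hne : t ≠ t' := fun h => hef (h ▸ rfl)
      have hd := hB.2.1 t ht t' ht' hne
      refine Finset.disjoint_left.mpr ?_
      intro a ha
      simp only [Finset.mem_insert, Finset.mem_singleton] at ha ⊢
      have hat : a ∈ tVerts t := by
        rcases ha with h | h
        · exact h ▸ (hcmem t ht).1
        · exact h ▸ (hcmem t ht).2
      intro hb
      have hat' : a ∈ tVerts t' := by
        rcases hb with h | h
        · exact h ▸ (hcmem t' ht').1
        · exact h ▸ (hcmem t' ht').2
      exact (Finset.disjoint_left.mp hd hat) hat'
  have hcard : (B.image c).card = n / 3 := by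
    rw [Finset.card_image_of_injOn hcinj, hBcard]
  have hsum : ∑ e ∈ B.image c, w e.1 e.2 = ∑ t ∈ B, w (c t).1 (c t).2 :=
    Finset.sum_image (fun t ht t' ht' h => hcinj ht ht' h)
  have part2 : 2 * ∑ t ∈ B, w (c t).1 (c t).2 ≤ 2 * ∑ e ∈ M, w e.1 e.2 := by
    have := hMopt (B.image c) hMatch hcard
    rw [hsum] at this
    linarith
  -- part 1
  have hinj : Set.InjOn (fun e : V × V => (e.1, e.2, z e)) M := by
    intro e _ f _ h
    simp only [Prod.mk.injEq] at h
    exact Prod.ext h.1 h.2.1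
  have part1 : 2 * ∑ e ∈ M, w e.1 e.2 ≤ ∑ t ∈ T₂, triW w t := by
    rw [hT₂, Finset.sum_image (fun e he f hf h => hinj he hf h), Finset.mul_sum]
    apply Finset.sum_le_sum
    intro e _
    have h1 := htri e.1 (z e) e.2
    have h2 := hsymm (z e) e.2
    simp only [triW]
    linarith
  -- part 3
  have part3 : (2 / 3) * ∑ t ∈ B, triW w t ≤ 2 * ∑ t ∈ B, w (c t).1 (c t).2 := by
    have hle : ∑ t ∈ B, triW w t ≤ ∑ t ∈ B, 3 * w (c t).1 (c t).2 := by
      apply Finset.sum_le_sum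
      intro t ht
      obtain ⟨h1, h2, h3⟩ := hcmax t ht
      simp only [triW]
      linarith
    rw [← Finset.mul_sum] at hle
    linarith
  exact ⟨part1, part2, part3⟩
end

section
/- Given a partial triangle packing P with p₁ triangle-components and p₂ edge-components (p₁ + p₂ ≤ n/3) in a metric complete graph on n vertices (3 | n), there exists a perfect triangle packing T with w(T) ≥ Σ_{t∈P} w(t) + Σ_{e∈P} 2·w(e). -/
/-!
Grow the partial packing one triangle at a time, keeping at most `n / 3` components. The
components cover at most `3 p₁ + 2 p₂` vertices, so while an edge `xy` remains there is an
uncovered vertex `z`, and the triangle `xyz` weighs `w x y + w x z + w z y ≥ 2 w x y`. Once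
only triangles remain and there are fewer than `n / 3` of them, three uncovered vertices
form a triangle of nonnegative weight. With `n / 3` disjoint triangles all vertices are covered.
-/

open Finset

section Weight

variable {V : Type} {w : V → V → ℝ}

lemma triW_nonneg (hnonneg : ∀ x y, 0 ≤ w x y) (t : V × V × V) : 0 ≤ triW w t :=
  add_nonneg (add_nonneg (hnonneg _ _) (hnonneg _ _)) (hnonneg _ _)

lemma two_mul_le_triW (hsymm : ∀ x y, w x y = w y x) (htri : ∀ x y z, w x z ≤ w x y + w y z)
    (x y z : V) : 2 * w x y ≤ triW w (x, y, z) := by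
  have h := htri x z y
  rw [hsymm z y] at h
  unfold triW
  linarith

def packingWeight (w : V → V → ℝ) (PT : Finset (V × V × V)) (PE : Finset (V × V)) : ℝ :=
  ∑ t ∈ PT, triW w t + ∑ e ∈ PE, 2 * w e.1 e.2

end Weight

section Packing

variable {V : Type} [DecidableEq V]

structure IsPartialTrianglePacking (PT : Finset (V × V × V)) (PE : Finset (V × V)) : Prop where
  tri_ne : ∀ t ∈ PT, t.1 ≠ t.2.1 ∧ t.1 ≠ t.2.2 ∧ t.2.1 ≠ t.2.2
  edge_ne : ∀ e ∈ PE, e.1 ≠ e.2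
  tri_disjoint : ∀ t ∈ PT, ∀ t' ∈ PT, t ≠ t' → Disjoint (tVerts t) (tVerts t')
  edge_disjoint : ∀ e ∈ PE, ∀ f ∈ PE, e ≠ f → Disjoint ({e.1, e.2} : Finset V) {f.1, f.2}
  tri_edge_disjoint : ∀ t ∈ PT, ∀ e ∈ PE, Disjoint (tVerts t) ({e.1, e.2} : Finset V)

def coveredVerts (PT : Finset (V × V × V)) (PE : Finset (V × V)) : Finset V :=
  PT.biUnion tVerts ∪ PE.biUnion fun e => {e.1, e.2}

lemma card_coveredVerts_le (PT : Finset (V × V × V)) (PE : Finset (V × V)) :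
    #(coveredVerts PT PE) ≤ 3 * #PT + 2 * #PE := by
  calc #(coveredVerts PT PE)
      ≤ #(PT.biUnion tVerts) + #(PE.biUnion fun e => ({e.1, e.2} : Finset V)) := card_union_le _ _
    _ ≤ #PT * 3 + #PE * 2 :=
        add_le_add (card_biUnion_le_card_mul _ _ _ fun _ _ => card_le_three)
          (card_biUnion_le_card_mul _ _ _ fun _ _ => card_le_two)
    _ = 3 * #PT + 2 * #PE := by ring

lemma card_tVerts {t : V × V × V} (h : t.1 ≠ t.2.1 ∧ t.1 ≠ t.2.2 ∧ t.2.1 ≠ t.2.2) :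
    #(tVerts t) = 3 :=
  card_eq_three.mpr ⟨t.1, t.2.1, t.2.2, h.1, h.2.1, h.2.2, rfl⟩

lemma tVerts_subset_coveredVerts {PT : Finset (V × V × V)} {t : V × V × V} (ht : t ∈ PT)
    (PE : Finset (V × V)) : tVerts t ⊆ coveredVerts PT PE :=
  (subset_biUnion_of_mem tVerts ht).trans subset_union_left

lemma edgeVerts_subset_coveredVerts {PE : Finset (V × V)} {e : V × V} (he : e ∈ PE)
    (PT : Finset (V × V × V)) : ({e.1, e.2} : Finset V) ⊆ coveredVerts PT PE :=
  (subset_biUnion_of_mem (fun e : V × V => ({e.1, e.2} : Finset V)) he).trans subset_union_right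

lemma notMem_of_disjoint_coveredVerts {PT : Finset (V × V × V)} {PE : Finset (V × V)}
    {t : V × V × V} (h : Disjoint (tVerts t) (coveredVerts PT PE)) : t ∉ PT := fun ht =>
  disjoint_left.mp h (mem_insert_self t.1 _) (tVerts_subset_coveredVerts ht PE (mem_insert_self _ _))

lemma exists_subset_compl_coveredVerts [Fintype V] {PT : Finset (V × V × V)}
    {PE : Finset (V × V)} {k : ℕ} (h : 3 * #PT + 2 * #PE + k ≤ Fintype.card V) :
    ∃ s ⊆ (coveredVerts PT PE)ᶜ, #s = k := by
  refine exists_subset_card_eq ?_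
  have := card_coveredVerts_le PT PE
  rw [card_compl]
  omega

namespace IsPartialTrianglePacking

variable {PT : Finset (V × V × V)} {PE : Finset (V × V)}

lemma erase (hP : IsPartialTrianglePacking PT PE) (e : V × V) :
    IsPartialTrianglePacking PT (PE.erase e) where
  tri_ne := hP.tri_ne
  edge_ne f hf := hP.edge_ne f (mem_of_mem_erase hf)
  tri_disjoint := hP.tri_disjoint
  edge_disjoint f hf g hg := hP.edge_disjoint f (mem_of_mem_erase hf) g (mem_of_mem_erase hg)
  tri_edge_disjoint t ht f hf := hP.tri_edge_disjoint t ht f (mem_of_mem_erase hf)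

lemma insert (hP : IsPartialTrianglePacking PT PE) {t : V × V × V}
    (ht : t.1 ≠ t.2.1 ∧ t.1 ≠ t.2.2 ∧ t.2.1 ≠ t.2.2)
    (hdisj : Disjoint (tVerts t) (coveredVerts PT PE)) :
    IsPartialTrianglePacking (insert t PT) PE where
  tri_ne s hs := by
    rcases mem_insert.mp hs with rfl | hs
    exacts [ht, hP.tri_ne s hs]
  edge_ne := hP.edge_ne
  tri_disjoint s hs s' hs' hne := by
    have key : ∀ u ∈ PT, Disjoint (tVerts t) (tVerts u) := fun u hu =>
      hdisj.mono_right (tVerts_subset_coveredVerts hu PE)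
    rcases mem_insert.mp hs with rfl | hsP <;> rcases mem_insert.mp hs' with rfl | hsP'
    · exact absurd rfl hne
    · exact key s' hsP'
    · exact (key s hsP).symm
    · exact hP.tri_disjoint s hsP s' hsP' hne
  edge_disjoint := hP.edge_disjoint
  tri_edge_disjoint s hs f hf := by
    rcases mem_insert.mp hs with rfl | hs
    exacts [hdisj.mono_right (edgeVerts_subset_coveredVerts hf PT),
      hP.tri_edge_disjoint s hs f hf]

lemma disjoint_coveredVerts_erase (hP : IsPartialTrianglePacking PT PE) {e : V × V} (he : e ∈ PE)
    {z : V} (hz : z ∉ coveredVerts PT PE) :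
    Disjoint (tVerts (e.1, e.2, z)) (coveredVerts PT (PE.erase e)) := by
  have hcov : coveredVerts PT (PE.erase e) ⊆ coveredVerts PT PE :=
    union_subset_union_right (biUnion_subset_biUnion_of_subset_left _ (erase_subset e PE))
  have hedge : Disjoint ({e.1, e.2} : Finset V) (coveredVerts PT (PE.erase e)) := by
    simp only [coveredVerts, disjoint_union_right, disjoint_biUnion_right]
    exact ⟨fun t ht => (hP.tri_edge_disjoint t ht e he).symm, fun f hf =>
      hP.edge_disjoint e he f (mem_of_mem_erase hf) (ne_of_mem_erase hf).symm⟩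
  rw [disjoint_left]
  intro x hx
  simp only [tVerts, mem_insert, mem_singleton] at hx
  rcases hx with rfl | rfl | rfl
  · exact disjoint_left.mp hedge (mem_insert_self _ _)
  · exact disjoint_left.mp hedge (mem_insert_of_mem (mem_singleton_self _))
  · exact fun h => hz (hcov h)

lemma isPerfectTrianglePacking [Fintype V] (hP : IsPartialTrianglePacking PT PE)
    (hcard : Fintype.card V ≤ 3 * #PT) : IsPerfectTrianglePacking PT := by
  have hcover : PT.biUnion tVerts = univ := by
    refine eq_univ_of_card _ (le_antisymm (card_le_univ _) ?_)
    rw [card_biUnion hP.tri_disjoint, sum_congr rfl fun t ht => card_tVerts (hP.tri_ne t ht),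
      sum_const, smul_eq_mul]
    omega
  exact ⟨hP.tri_ne, hP.tri_disjoint, fun v => mem_biUnion.mp (hcover ▸ mem_univ v)⟩

end IsPartialTrianglePacking

section Extension

variable {w : V → V → ℝ} {PT : Finset (V × V × V)} {PE : Finset (V × V)}

lemma packingWeight_le_insert (hnonneg : ∀ x y, 0 ≤ w x y) {t : V × V × V} (ht : t ∉ PT) :
    packingWeight w PT PE ≤ packingWeight w (insert t PT) PE := by
  unfold packingWeight
  rw [sum_insert ht]
  linarith [triW_nonneg hnonneg t]

lemma packingWeight_le_insert_erase (hsymm : ∀ x y, w x y = w y x)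
    (htri : ∀ x y z, w x z ≤ w x y + w y z) {e : V × V} (he : e ∈ PE) {z : V}
    (ht : (e.1, e.2, z) ∉ PT) :
    packingWeight w PT PE ≤ packingWeight w (insert (e.1, e.2, z) PT) (PE.erase e) := by
  unfold packingWeight
  rw [sum_insert ht, ← add_sum_erase _ _ he]
  linarith [two_mul_le_triW hsymm htri e.1 e.2 z]

lemma exists_insert_triangle [Fintype V] (hnonneg : ∀ x y, 0 ≤ w x y)
    (hP : IsPartialTrianglePacking PT ∅) (hcard : 3 * #PT + 3 ≤ Fintype.card V) :
    ∃ t ∉ PT, IsPartialTrianglePacking (insert t PT) ∅ ∧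
      packingWeight w PT ∅ ≤ packingWeight w (insert t PT) ∅ := by
  obtain ⟨s, hs, hs3⟩ := exists_subset_compl_coveredVerts (PT := PT) (PE := ∅) (k := 3)
    (by simpa using hcard)
  obtain ⟨a, b, c, hab, hac, hbc, rfl⟩ := card_eq_three.mp hs3
  have hdisj : Disjoint (tVerts (a, b, c)) (coveredVerts PT ∅) :=
    subset_compl_iff_disjoint_right.mp hs
  have hnot := notMem_of_disjoint_coveredVerts hdisj
  exact ⟨_, hnot, hP.insert ⟨hab, hac, hbc⟩ hdisj, packingWeight_le_insert hnonneg hnot⟩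

lemma exists_complete_edge [Fintype V] (hsymm : ∀ x y, w x y = w y x)
    (htri : ∀ x y z, w x z ≤ w x y + w y z) (hP : IsPartialTrianglePacking PT PE)
    {e : V × V} (he : e ∈ PE) (hcard : 3 * #PT + 2 * #PE < Fintype.card V) :
    ∃ t ∉ PT, IsPartialTrianglePacking (insert t PT) (PE.erase e) ∧
      packingWeight w PT PE ≤ packingWeight w (insert t PT) (PE.erase e) := by
  obtain ⟨s, hs, hs1⟩ := exists_subset_compl_coveredVerts (PT := PT) (PE := PE) (k := 1) hcard
  obtain ⟨z, rfl⟩ := card_eq_one.mp hs1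
  have hz : z ∉ coveredVerts PT PE := mem_compl.mp (hs (mem_singleton_self z))
  have hne : e.1 ≠ z ∧ e.2 ≠ z := by
    constructor <;> rintro rfl <;> exact hz (edgeVerts_subset_coveredVerts he PT (by simp))
  have hdisj := hP.disjoint_coveredVerts_erase he hz
  have hnot := notMem_of_disjoint_coveredVerts hdisj
  exact ⟨_, hnot, (hP.erase e).insert ⟨hP.edge_ne e he, hne⟩ hdisj,
    packingWeight_le_insert_erase hsymm htri he hnot⟩

end Extension

theorem IsPartialTrianglePacking.exists_perfect_le_packingWeight [Fintype V] {w : V → V → ℝ}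
    (hsymm : ∀ x y, w x y = w y x) (hnonneg : ∀ x y, 0 ≤ w x y)
    (htri : ∀ x y z, w x z ≤ w x y + w y z) (h3 : 3 ∣ Fintype.card V)
    {PT : Finset (V × V × V)} {PE : Finset (V × V)} (hP : IsPartialTrianglePacking PT PE)
    (hcount : #PT + #PE ≤ Fintype.card V / 3) :
    ∃ T : Finset (V × V × V), IsPerfectTrianglePacking T ∧ #T = Fintype.card V / 3 ∧
      packingWeight w PT PE ≤ ∑ t ∈ T, triW w t := by
  obtain ⟨k, hk⟩ := Nat.exists_eq_add_of_le (le_of_add_le_left hcount)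
  induction k generalizing PT PE with
  | zero =>
    obtain rfl : PE = ∅ := card_eq_zero.mp (by omega)
    exact ⟨PT, hP.isPerfectTrianglePacking (by omega), by omega, by simp [packingWeight]⟩
  | succ k ih =>
    rcases PE.eq_empty_or_nonempty with rfl | ⟨e, he⟩
    · obtain ⟨t, ht, hP', hw⟩ := exists_insert_triangle (w := w) hnonneg hP (by omega)
      obtain ⟨T, hT, hTcard, hTw⟩ := ih hP' (by rw [card_insert_of_notMem ht, card_empty]; omega)
        (by rw [card_insert_of_notMem ht]; omega)
      exact ⟨T, hT, hTcard, hw.trans hTw⟩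
    · have hPE := card_pos.mpr ⟨e, he⟩
      obtain ⟨t, ht, hP', hw⟩ := exists_complete_edge hsymm htri hP he (by omega)
      obtain ⟨T, hT, hTcard, hTw⟩ := ih hP'
        (by rw [card_insert_of_notMem ht, card_erase_of_mem he]; omega)
        (by rw [card_insert_of_notMem ht]; omega)
      exact ⟨T, hT, hTcard, hw.trans hTw⟩

end Packing

theorem stmt7 {V : Type} [Fintype V] [DecidableEq V]
    (w : V → V → ℝ)
    (hsymm : ∀ x y, w x y = w y x) (hnonneg : ∀ x y, 0 ≤ w x y)
    (htri : ∀ x y z, w x z ≤ w x y + w y z)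
    (n : ℕ) (hn : n = Fintype.card V) (h3 : 3 ∣ n)
    (PT : Finset (V × V × V)) (PE : Finset (V × V))
    (hPT : ∀ t ∈ PT, t.1 ≠ t.2.1 ∧ t.1 ≠ t.2.2 ∧ t.2.1 ≠ t.2.2)
    (hPE : ∀ e ∈ PE, e.1 ≠ e.2)
    (hdisj1 : ∀ t ∈ PT, ∀ t' ∈ PT, t ≠ t' → Disjoint (tVerts t) (tVerts t'))
    (hdisj2 : ∀ e ∈ PE, ∀ f ∈ PE, e ≠ f →
      Disjoint ({e.1, e.2} : Finset V) {f.1, f.2})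
    (hdisj3 : ∀ t ∈ PT, ∀ e ∈ PE, Disjoint (tVerts t) ({e.1, e.2} : Finset V))
    (hcount : PT.card + PE.card ≤ n / 3) :
    ∃ T : Finset (V × V × V), IsPerfectTrianglePacking T ∧ T.card = n / 3 ∧
      (∑ t ∈ PT, triW w t) + (∑ e ∈ PE, 2 * w e.1 e.2) ≤ ∑ t ∈ T, triW w t := by
  subst hn
  exact IsPartialTrianglePacking.exists_perfect_le_packingWeight hsymm hnonneg htri h3
    ⟨hPT, hPE, hdisj1, hdisj2, hdisj3⟩ hcount
end

section
/- Let X and Y be edge-disjoint matchings such that every edge of Y shares exactly one endpoint with an edge of X and its other endpoint is not covered by X, and |X| = n/3 with |Y| ≤ |X|. Then X ∪ Y consists of exactly |Y| path-components on 3 vertices and |X| − |Y| edge-components; completing each 3-vertex path xyz (with xy ∈ X, good triplet condition w(xy) ≤ (1−τ)(w(xz)+w(yz))) into a triangle, and each edge-component into a triangle via an unused vertex, yields a triangle packing T with w(T) ≥ τ·w̃(Y) + 2·w(X), where w̃(zx) = w(xz) + w(yz) for the triplet (x,y;z). -/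
lemma pair_disj' {V : Type} [DecidableEq V] {a b c d : V}
    (h : Disjoint ({a,b}:Finset V) {c,d}) :
    a ≠ c ∧ a ≠ d ∧ b ≠ c ∧ b ≠ d := by
  simp [Finset.disjoint_left] at h
  tauto

lemma disj3' {V : Type} [DecidableEq V] {a b c d e f : V}
    (h1:a≠d)(h2:a≠e)(h3:a≠f)(h4:b≠d)(h5:b≠e)(h6:b≠f)(h7:c≠d)(h8:c≠e)(h9:c≠f) :
    Disjoint ({a,b,c}:Finset V) {d,e,f} := by
  simp [Finset.disjoint_left]
  tauto

theorem stmt17 {V : Type} [Fintype V] [DecidableEq V]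
    (w : V → V → ℝ)
    (hsymm : ∀ x y, w x y = w y x) (hnonneg : ∀ x y, 0 ≤ w x y)
    (htri : ∀ x y z, w x z ≤ w x y + w y z)
    (n : ℕ) (hn : n = Fintype.card V) (h3 : 3 ∣ n)
    (τ : ℝ) (hτ0 : 0 ≤ τ) (hτ1 : τ ≤ 1 / 3)
    (X : Finset (V × V))
    (hXne : ∀ e ∈ X, e.1 ≠ e.2)
    (hXmatch : ∀ e ∈ X, ∀ f ∈ X, e ≠ f →
      Disjoint ({e.1, e.2} : Finset V) {f.1, f.2})
    (hXcard : X.card = n / 3)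
    (TY : Finset (V × V × V))
    (hYX : ∀ t ∈ TY, (t.1, t.2.1) ∈ X)
    (hYz : ∀ t ∈ TY, ∀ e ∈ X, t.2.2 ≠ e.1 ∧ t.2.2 ≠ e.2)
    (hYmatch : ∀ t ∈ TY, ∀ t' ∈ TY, t ≠ t' →
      Disjoint ({t.2.2, t.1} : Finset V) {t'.2.2, t'.1})
    (hgood : ∀ t ∈ TY, w t.1 t.2.1 ≤ (1 - τ) * (w t.1 t.2.2 + w t.2.1 t.2.2)) :
    ∃ T : Finset (V × V × V), IsPerfectTrianglePacking T ∧ T.card = n / 3 ∧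
      (∀ t ∈ TY, t ∈ T) ∧
      τ * (∑ t ∈ TY, (w t.1 t.2.2 + w t.2.1 t.2.2)) + 2 * ∑ e ∈ X, w e.1 e.2
        ≤ ∑ t ∈ T, triW w t := by
  classical
  -- Vertex sets
  set Xv : Finset V := X.biUnion (fun e => {e.1, e.2}) with hXvdef
  set Zs : Finset V := TY.image (fun t => t.2.2) with hZsdef
  set I : Finset (V × V) := TY.image (fun t => (t.1, t.2.1)) with hIdef
  set X' : Finset (V × V) := X \ I with hX'def
  set L : Finset V := Finset.univ \ (Xv ∪ Zs) with hLdef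
  -- basic membership facts
  have hmemXv : ∀ e ∈ X, e.1 ∈ Xv ∧ e.2 ∈ Xv := by
    intro e he
    constructor <;> exact Finset.mem_biUnion.mpr ⟨e, he, by simp⟩
  have hzXv : ∀ t ∈ TY, t.2.2 ∉ Xv := by
    intro t ht hv
    rw [hXvdef, Finset.mem_biUnion] at hv
    obtain ⟨e, he, hv⟩ := hv
    simp only [Finset.mem_insert, Finset.mem_singleton] at hv
    rcases hv with h | h
    · exact (hYz t ht e he).1 h
    · exact (hYz t ht e he).2 h
  -- differences between distinct triplets in TY
  have hTYne : ∀ t ∈ TY, ∀ t' ∈ TY, t ≠ t' →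
      t.1 ≠ t'.1 ∧ t.1 ≠ t'.2.2 ∧ t.2.2 ≠ t'.1 ∧ t.2.2 ≠ t'.2.2 := by
    intro t ht t' ht' hne
    have h := pair_disj' (hYmatch t ht t' ht' hne)
    exact ⟨h.2.2.2, h.2.2.1, h.2.1, h.1⟩
  -- injectivity of t ↦ (t.1, t.2.1)
  have hIinj : Set.InjOn (fun t : V × V × V => (t.1, t.2.1)) TY := by
    intro t ht t' ht' heq
    by_contra hne
    simp only [Prod.mk.injEq] at heq
    exact (hTYne t ht t' ht' hne).1 heq.1
  have hIcard : I.card = TY.card := Finset.card_image_of_injOn hIinj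
  have hIsub : I ⊆ X := by
    intro e he
    rw [hIdef, Finset.mem_image] at he
    obtain ⟨t, ht, rfl⟩ := he
    exact hYX t ht
  have hZinj : Set.InjOn (fun t : V × V × V => t.2.2) TY := by
    intro t ht t' ht' heq
    by_contra hne
    exact (hTYne t ht t' ht' hne).2.2.2 heq
  have hZcard : Zs.card = TY.card := Finset.card_image_of_injOn hZinj
  -- edges of distinct triplets are distinct X-edges, full vertex disjointness
  have hTYdisj : ∀ t ∈ TY, ∀ t' ∈ TY, t ≠ t' → Disjoint (tVerts t) (tVerts t') := by
    intro t ht t' ht' hne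
    obtain ⟨hxx, hxz, hzx, hzz⟩ := hTYne t ht t' ht' hne
    have hedge : ((t.1, t.2.1) : V × V) ≠ (t'.1, t'.2.1) := by
      intro h
      simp only [Prod.mk.injEq] at h
      exact hxx h.1
    have hp := pair_disj' (hXmatch _ (hYX t ht) _ (hYX t' ht') hedge)
    have hz' := hYz t' ht' _ (hYX t ht)
    have hz := hYz t ht _ (hYX t' ht')
    exact disj3' hp.1 hp.2.1 hxz hp.2.2.1 hp.2.2.2 (Ne.symm hz'.2) hzx hz.2 hzz
  -- cardinalities
  have hXvcard : Xv.card = 2 * X.card := by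
    rw [hXvdef, Finset.card_biUnion hXmatch]
    rw [Finset.sum_congr rfl (fun e he => by
      rw [Finset.card_insert_of_notMem (by simp [hXne e he]), Finset.card_singleton])]
    simp [mul_comm]
  have hdisjXZ : Disjoint Xv Zs := by
    rw [Finset.disjoint_right]
    intro v hv
    rw [hZsdef, Finset.mem_image] at hv
    obtain ⟨t, ht, rfl⟩ := hv
    exact hzXv t ht
  have hTYle : TY.card ≤ X.card := hIcard ▸ Finset.card_le_card hIsub
  have hX'card : X'.card = X.card - TY.card := by
    rw [hX'def, Finset.card_sdiff_of_subset hIsub, hIcard]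
  have hLcard : L.card = Fintype.card V - (2 * X.card + TY.card) := by
    rw [hLdef, Finset.card_sdiff_of_subset (Finset.subset_univ _), Finset.card_univ,
      Finset.card_union_of_disjoint hdisjXZ, hXvcard, hZcard]
  have hcard : X'.card = L.card := by
    obtain ⟨c, hc⟩ := h3
    have hXc : X.card = c := by omega
    have hnV : Fintype.card V = 3 * c := by omega
    rw [hX'card, hLcard, hXc, hnV]
    omega
  -- the bijection between leftover edges and leftover vertices
  let φ : {x // x ∈ X'} ≃ {x // x ∈ L} := Finset.equivOfCardEq hcard
  set g : V × V → V := fun p => if h : p ∈ X' then (φ ⟨p, h⟩ : V) else p.1 with hgdef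
  have hgL : ∀ p ∈ X', g p ∈ L := by
    intro p hp
    simp only [hgdef, dif_pos hp]
    exact (φ ⟨p, hp⟩).2
  have hginj : ∀ p ∈ X', ∀ q ∈ X', g p = g q → p = q := by
    intro p hp q hq h
    simp only [hgdef, dif_pos hp, dif_pos hq] at h
    have := φ.injective (Subtype.ext h)
    exact congrArg Subtype.val this
  have hgsurj : ∀ v ∈ L, ∃ p ∈ X', g p = v := by
    intro v hv
    refine ⟨(φ.symm ⟨v, hv⟩ : V × V), (φ.symm ⟨v, hv⟩).2, ?_⟩
    simp only [hgdef, dif_pos (φ.symm ⟨v, hv⟩).2]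
    rw [show (⟨(φ.symm ⟨v, hv⟩ : V × V), (φ.symm ⟨v, hv⟩).2⟩ : {x // x ∈ X'})
        = φ.symm ⟨v, hv⟩ from Subtype.ext rfl, Equiv.apply_symm_apply]
  have hLnot : ∀ v ∈ L, v ∉ Xv ∧ v ∉ Zs := by
    intro v hv
    rw [hLdef, Finset.mem_sdiff, Finset.mem_union] at hv
    tauto
  -- the triangle completing function
  set F : V × V → V × V × V := fun p => (p.1, p.2, g p) with hFdef
  set T : Finset (V × V × V) := TY ∪ X'.image F with hTdef
  have hX'X : X' ⊆ X := Finset.sdiff_subset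
  have hTYmem : ∀ t ∈ TY, t.2.2 ∈ Zs := by
    intro t ht; exact Finset.mem_image.mpr ⟨t, ht, rfl⟩
  have hTdisjU : Disjoint TY (X'.image F) := by
    rw [Finset.disjoint_right]
    intro t ht htY
    rw [Finset.mem_image] at ht
    obtain ⟨p, hp, rfl⟩ := ht
    exact (hLnot _ (hgL p hp)).2 (hTYmem _ htY)
  have hFinj : Set.InjOn F X' := by
    intro p hp q hq h
    simp only [hFdef, Prod.mk.injEq] at h
    exact Prod.ext h.1 h.2.1
  -- the four claims
  refine ⟨T, ⟨?_, ?_, ?_⟩, ?_, ?_, ?_⟩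
  · -- nondegeneracy
    intro t ht
    rw [hTdef, Finset.mem_union] at ht
    rcases ht with ht | ht
    · have h1 := hXne _ (hYX t ht)
      have h2 := hYz t ht _ (hYX t ht)
      exact ⟨h1, (Ne.symm h2.1), (Ne.symm h2.2)⟩
    · rw [Finset.mem_image] at ht
      obtain ⟨p, hp, rfl⟩ := ht
      have hpe := hmemXv p (hX'X hp)
      have hg := (hLnot _ (hgL p hp)).1
      simp only [hFdef]
      exact ⟨hXne p (hX'X hp), fun h => hg (h ▸ hpe.1), fun h => hg (h ▸ hpe.2)⟩
  · -- disjointness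
    intro t ht t' ht' hne
    rw [hTdef, Finset.mem_union] at ht ht'
    have key : ∀ s ∈ TY, ∀ p ∈ X', Disjoint (tVerts s) (tVerts (F p)) := by
      intro s hs p hp
      have hedge : ((s.1, s.2.1) : V × V) ≠ p := by
        intro h
        rw [hX'def, Finset.mem_sdiff] at hp
        exact hp.2 (h ▸ Finset.mem_image.mpr ⟨s, hs, rfl⟩)
      have hpd := pair_disj' (hXmatch _ (hYX s hs) _ (hX'X hp) hedge)
      have hz := hYz s hs _ (hX'X hp)
      have hgp := hLnot _ (hgL p hp)
      have hg1 : s.1 ≠ g p := fun h => hgp.1 (h ▸ (hmemXv _ (hYX s hs)).1)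
      have hg2 : s.2.1 ≠ g p := fun h => hgp.1 (h ▸ (hmemXv _ (hYX s hs)).2)
      have hg3 : s.2.2 ≠ g p := fun h => hgp.2 (h ▸ hTYmem s hs)
      exact disj3' hpd.1 hpd.2.1 hg1 hpd.2.2.1 hpd.2.2.2 hg2 hz.1 hz.2 hg3
    rcases ht with ht | ht <;> rcases ht' with ht' | ht'
    · exact hTYdisj t ht t' ht' hne
    · obtain ⟨p, hp, rfl⟩ := Finset.mem_image.mp ht'
      exact key t ht p hp
    · obtain ⟨p, hp, rfl⟩ := Finset.mem_image.mp ht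
      exact (key t' ht' p hp).symm
    · obtain ⟨p, hp, rfl⟩ := Finset.mem_image.mp ht
      obtain ⟨q, hq, rfl⟩ := Finset.mem_image.mp ht'
      have hpq : p ≠ q := fun h => hne (h ▸ rfl)
      have hpd := pair_disj' (hXmatch p (hX'X hp) q (hX'X hq) hpq)
      have hgq := hLnot _ (hgL q hq)
      have hgp := hLnot _ (hgL p hp)
      have h1 : p.1 ≠ g q := fun h => hgq.1 (h ▸ (hmemXv p (hX'X hp)).1)
      have h2 : p.2 ≠ g q := fun h => hgq.1 (h ▸ (hmemXv p (hX'X hp)).2)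
      have h3 : g p ≠ q.1 := fun h => hgp.1 (h ▸ (hmemXv q (hX'X hq)).1)
      have h4 : g p ≠ q.2 := fun h => hgp.1 (h ▸ (hmemXv q (hX'X hq)).2)
      have h5 : g p ≠ g q := fun h => hpq (hginj p hp q hq h)
      exact disj3' hpd.1 hpd.2.1 h1 hpd.2.2.1 hpd.2.2.2 h2 h3 h4 h5
  · -- covering
    intro v
    by_cases hv : v ∈ Xv
    · rw [hXvdef, Finset.mem_biUnion] at hv
      obtain ⟨e, he, hv⟩ := hv
      simp only [Finset.mem_insert, Finset.mem_singleton] at hv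
      by_cases heI : e ∈ I
      · rw [hIdef, Finset.mem_image] at heI
        obtain ⟨t, ht, rfl⟩ := heI
        refine ⟨t, Finset.mem_union_left _ ht, ?_⟩
        rcases hv with h | h <;> simp [tVerts, h]
      · have heX' : e ∈ X' := Finset.mem_sdiff.mpr ⟨he, heI⟩
        refine ⟨F e, Finset.mem_union_right _ (Finset.mem_image_of_mem F heX'), ?_⟩
        rcases hv with h | h <;> simp [tVerts, hFdef, h]
    · by_cases hz : v ∈ Zs
      · rw [hZsdef, Finset.mem_image] at hz
        obtain ⟨t, ht, rfl⟩ := hz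
        exact ⟨t, Finset.mem_union_left _ ht, by simp [tVerts]⟩
      · have hvL : v ∈ L := by
          rw [hLdef, Finset.mem_sdiff, Finset.mem_union]
          exact ⟨Finset.mem_univ v, by tauto⟩
        obtain ⟨p, hp, hgp⟩ := hgsurj v hvL
        refine ⟨F p, Finset.mem_union_right _ (Finset.mem_image_of_mem F hp), ?_⟩
        simp [tVerts, hFdef, hgp.symm]
  · -- cardinality
    rw [hTdef, Finset.card_union_of_disjoint hTdisjU, Finset.card_image_of_injOn hFinj,
      hX'card]
    omega
  · -- TY ⊆ T
    intro t ht
    exact Finset.mem_union_left _ ht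
  · -- weight bound
    have hsumT : ∑ t ∈ T, triW w t = ∑ t ∈ TY, triW w t + ∑ p ∈ X', triW w (F p) := by
      rw [hTdef, Finset.sum_union hTdisjU, Finset.sum_image hFinj]
    have hsumX : ∑ e ∈ X, w e.1 e.2 =
        ∑ t ∈ TY, w t.1 t.2.1 + ∑ p ∈ X', w p.1 p.2 := by
      have : X = I ∪ X' := by
        rw [hX'def, Finset.union_sdiff_of_subset hIsub]
      rw [this, Finset.sum_union Finset.disjoint_sdiff, hIdef, Finset.sum_image hIinj]
    have h1 : ∀ t ∈ TY,
        τ * (w t.1 t.2.2 + w t.2.1 t.2.2) + 2 * w t.1 t.2.1 ≤ triW w t := by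
      intro t ht
      have := hgood t ht
      simp only [triW]
      linarith
    have h2 : ∀ p ∈ X', 2 * w p.1 p.2 ≤ triW w (F p) := by
      intro p hp
      have ht := htri p.1 (g p) p.2
      have hs := hsymm (g p) p.2
      simp only [triW, hFdef]
      linarith
    calc τ * (∑ t ∈ TY, (w t.1 t.2.2 + w t.2.1 t.2.2)) + 2 * ∑ e ∈ X, w e.1 e.2
        = ∑ t ∈ TY, (τ * (w t.1 t.2.2 + w t.2.1 t.2.2) + 2 * w t.1 t.2.1)
          + ∑ p ∈ X', 2 * w p.1 p.2 := by
          simp only [hsumX, Finset.mul_sum, mul_add, Finset.sum_add_distrib]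
          ring
      _ ≤ ∑ t ∈ TY, triW w t + ∑ p ∈ X', triW w (F p) :=
          add_le_add (Finset.sum_le_sum h1) (Finset.sum_le_sum h2)
      _ = ∑ t ∈ T, triW w t := hsumT.symm
end

section
/- Let nonnegative reals α₁,…,α₅, ρᵢ, σᵢ, θᵢ (i=1..5) satisfy: Σαᵢ = 1; ρᵢ + σᵢ + θᵢ = αᵢ; ρᵢ + σᵢ ≥ θᵢ ≥ σᵢ ≥ ρᵢ ≥ 0 for all i. With τ = 1/4, define y as the maximum of: (α₁ + 2ρ₂ + 2ρ₃), (2θ₁+2θ₂+2θ₃+2θ₄+2θ₅), (2/3 + (97(1−3τ)/3645)α₂ + (97(1−3τ)/1215)α₄), and (2/3 + (τ/36)α₃ + (τ/36)α₅). Then y ≥ 0.66835. -/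
theorem stmt18 (α ρ σ θ : Fin 5 → ℝ)
    (hsum : ∑ i, α i = 1)
    (hdecomp : ∀ i, ρ i + σ i + θ i = α i)
    (hord : ∀ i, 0 ≤ ρ i ∧ ρ i ≤ σ i ∧ σ i ≤ θ i ∧ θ i ≤ ρ i + σ i) :
    (0.66835 : ℝ) ≤
      max (max (α 0 + 2 * ρ 1 + 2 * ρ 2)
               (2 * θ 0 + 2 * θ 1 + 2 * θ 2 + 2 * θ 3 + 2 * θ 4))
          (max (2 / 3 + (97 * (1 - 3 * (1 / 4)) / 3645) * α 1
                      + (97 * (1 - 3 * (1 / 4)) / 1215) * α 3)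
               (2 / 3 + ((1 / 4) / 36) * α 2 + ((1 / 4) / 36) * α 4)) := by
  obtain ⟨h00, h01, h02, h03⟩ := hord 0
  obtain ⟨h10, h11, h12, h13⟩ := hord 1
  obtain ⟨h20, h21, h22, h23⟩ := hord 2
  obtain ⟨h30, h31, h32, h33⟩ := hord 3
  obtain ⟨h40, h41, h42, h43⟩ := hord 4
  have d0 := hdecomp 0
  have d1 := hdecomp 1
  have d2 := hdecomp 2
  have d3 := hdecomp 3
  have d4 := hdecomp 4
  rw [Fin.sum_univ_five] at hsum
  have hA : (α 0 + 2 * ρ 1 + 2 * ρ 2) ≤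
      max (max (α 0 + 2 * ρ 1 + 2 * ρ 2)
               (2 * θ 0 + 2 * θ 1 + 2 * θ 2 + 2 * θ 3 + 2 * θ 4))
          (max (2 / 3 + (97 * (1 - 3 * (1 / 4)) / 3645) * α 1
                      + (97 * (1 - 3 * (1 / 4)) / 1215) * α 3)
               (2 / 3 + ((1 / 4) / 36) * α 2 + ((1 / 4) / 36) * α 4)) :=
    le_max_of_le_left (le_max_left _ _)
  have hB : (2 * θ 0 + 2 * θ 1 + 2 * θ 2 + 2 * θ 3 + 2 * θ 4) ≤
      max (max (α 0 + 2 * ρ 1 + 2 * ρ 2)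
               (2 * θ 0 + 2 * θ 1 + 2 * θ 2 + 2 * θ 3 + 2 * θ 4))
          (max (2 / 3 + (97 * (1 - 3 * (1 / 4)) / 3645) * α 1
                      + (97 * (1 - 3 * (1 / 4)) / 1215) * α 3)
               (2 / 3 + ((1 / 4) / 36) * α 2 + ((1 / 4) / 36) * α 4)) :=
    le_max_of_le_left (le_max_right _ _)
  have hC : (2 / 3 + (97 * (1 - 3 * (1 / 4)) / 3645) * α 1
                      + (97 * (1 - 3 * (1 / 4)) / 1215) * α 3) ≤
      max (max (α 0 + 2 * ρ 1 + 2 * ρ 2)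
               (2 * θ 0 + 2 * θ 1 + 2 * θ 2 + 2 * θ 3 + 2 * θ 4))
          (max (2 / 3 + (97 * (1 - 3 * (1 / 4)) / 3645) * α 1
                      + (97 * (1 - 3 * (1 / 4)) / 1215) * α 3)
               (2 / 3 + ((1 / 4) / 36) * α 2 + ((1 / 4) / 36) * α 4)) :=
    le_max_of_le_right (le_max_left _ _)
  have hD : (2 / 3 + ((1 / 4) / 36) * α 2 + ((1 / 4) / 36) * α 4) ≤
      max (max (α 0 + 2 * ρ 1 + 2 * ρ 2)
               (2 * θ 0 + 2 * θ 1 + 2 * θ 2 + 2 * θ 3 + 2 * θ 4))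
          (max (2 / 3 + (97 * (1 - 3 * (1 / 4)) / 3645) * α 1
                      + (97 * (1 - 3 * (1 / 4)) / 1215) * α 3)
               (2 / 3 + ((1 / 4) / 36) * α 2 + ((1 / 4) / 36) * α 4)) :=
    le_max_of_le_right (le_max_right _ _)
  linarith
end
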